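/- There exists a universal constant C > 0 such that for every integer k ≥ 2, every integer t ≥ 1, and every probability vector p : {1,...,k} → (0,1] (Σ_{i=1}^k p_i = 1), the random variable W = log₂(X/t) — where i ~ p is drawn first and then X ~ NB(t, p_i) — satisfies Var[W] ≤ C·(log₂ k)². Explicitly: Σ_{i=1}^k p_i Σ_{ℓ=t}^∞ C(ℓ−1,t−1)p_i^t(1−p_i)^{ℓ−t}·(log₂(ℓ/t))² − ( Σ_{i=1}^k p_i Σ_{ℓ=t}^∞ C(ℓ−1,t−1)p_i^t(1−p_i)^{ℓ−t}·log₂(ℓ/t) )² ≤ C·(log₂ k)². -/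

import Mathlib

/-
Bound the variance by the second moment `E[W²]`. Conditionally on `i`, write
`log (X/t) = log (1/pᵢ) + log (pᵢ X/t) ≤ log (1/pᵢ) + 2 √(pᵢ X/t)`; squaring and using
`E[X] = t/pᵢ` gives `E[log² (X/t) | i] ≤ 2 log² pᵢ + 8`. It remains to bound `∑ pᵢ log² pᵢ`:
indices with `pᵢ ≥ k⁻²` contribute at most `4 log² k` in total, and the others at most
`16 √pᵢ ≤ 16/k` each.
-/

/-- The negative binomial pmf `NB(t,p)` at `ℓ`. -/
noncomputable def nbPMF (t : ℕ) (p : ℝ) (ℓ : ℕ) : ℝ :=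
  ((ℓ - 1).choose (t - 1) : ℝ) * p ^ t * (1 - p) ^ (ℓ - t)

open Real Finset

lemma Real.log_le_two_mul_sqrt {y : ℝ} (hy : 0 ≤ y) : log y ≤ 2 * √y := by
  rw [sqrt_eq_rpow]
  convert log_le_rpow_div hy (by norm_num : (0 : ℝ) < 1 / 2) using 1
  ring

lemma Real.log_sq_le_sixteen_mul_sqrt {y : ℝ} (hy : 1 ≤ y) : log y ^ 2 ≤ 16 * √y := by
  have hlog : 0 ≤ log √y := log_nonneg (one_le_sqrt.mpr hy)
  have hle := log_le_two_mul_sqrt (sqrt_nonneg y)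
  calc log y ^ 2 = 4 * log √y ^ 2 := by rw [log_sqrt (by linarith)]; ring
    _ ≤ 4 * (2 * √(√y)) ^ 2 := by gcongr
    _ = 16 * √y := by rw [mul_pow, sq_sqrt (sqrt_nonneg y)]; ring

lemma Real.mul_log_sq_le {p k : ℝ} (hp : 0 < p) (hp1 : p ≤ 1) (hk : 0 < k) :
    p * log p ^ 2 ≤ 4 * p * log k ^ 2 + 16 / k := by
  rcases le_or_gt (k ^ 2)⁻¹ p with hbig | hsmall
  · have hle : -log p ≤ 2 * log k :=
      calc -log p = log p⁻¹ := (log_inv p).symm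
        _ ≤ log (k ^ 2) := log_le_log (by positivity) ((inv_le_comm₀ (by positivity) hp).mp hbig)
        _ = 2 * log k := by simp [log_pow]
    have : p * log p ^ 2 ≤ p * (2 * log k) ^ 2 := by
      rw [← neg_sq]
      gcongr
      exact neg_nonneg.mpr (log_nonpos hp.le hp1)
    nlinarith [div_pos (by norm_num : (0:ℝ) < 16) hk]
  · have hsqrt : √p < k⁻¹ := (sqrt_lt' (by positivity)).mpr (by rwa [inv_pow])
    calc p * log p ^ 2 = p * log p⁻¹ ^ 2 := by rw [log_inv, neg_sq]
      _ ≤ p * (16 * √p⁻¹) := by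
        gcongr
        exact log_sq_le_sixteen_mul_sqrt ((one_le_inv₀ hp).mpr hp1)
      _ = 16 * √p := by rw [mul_left_comm, sqrt_inv, ← div_eq_mul_inv, div_sqrt]
      _ ≤ 4 * p * log k ^ 2 + 16 / k := by rw [div_eq_mul_inv]; nlinarith [sq_nonneg (log k)]

lemma Real.log_sq_le_of_one_le {x p : ℝ} (hx : 1 ≤ x) (hp : 0 < p) :
    log x ^ 2 ≤ 2 * log p ^ 2 + 8 * (p * x) := by
  have hsplit : log x = -log p + log (p * x) := by
    rw [log_mul hp.ne' (by positivity)]; ring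
  have hle := log_le_two_mul_sqrt (by positivity : 0 ≤ p * x)
  have hsq : √(p * x) ^ 2 = p * x := sq_sqrt (by positivity)
  nlinarith [log_nonneg hx, sq_nonneg (log p + 2 * √(p * x))]

lemma nbPMF_succ_add (s n : ℕ) (p : ℝ) :
    nbPMF (s + 1) p (s + 1 + n) = p ^ (s + 1) * ((n + s).choose s * (1 - p) ^ n) := by
  rw [nbPMF, show s + 1 + n - 1 = n + s by omega, Nat.add_sub_cancel, Nat.add_sub_cancel_left]
  ring

lemma nbPMF_nonneg (t : ℕ) {p : ℝ} (hp : 0 ≤ p) (hp1 : p ≤ 1) (ℓ : ℕ) : 0 ≤ nbPMF t p ℓ := by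
  have : 0 ≤ 1 - p := by linarith
  unfold nbPMF
  positivity

lemma norm_one_sub_lt_one {p : ℝ} (hp : 0 < p) (hp1 : p ≤ 1) : ‖1 - p‖ < 1 := by
  rw [norm_eq_abs, abs_lt]; constructor <;> linarith

lemma hasSum_nbPMF {t : ℕ} (ht : 1 ≤ t) {p : ℝ} (hp : 0 < p) (hp1 : p ≤ 1) :
    HasSum (fun n ↦ nbPMF t p (t + n)) 1 := by
  obtain ⟨s, rfl⟩ := Nat.exists_eq_add_of_le' ht
  have h := (hasSum_choose_mul_geometric_of_norm_lt_one s (norm_one_sub_lt_one hp hp1)).mul_left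
    (p ^ (s + 1))
  rw [sub_sub_cancel, mul_one_div_cancel (by positivity)] at h
  simpa only [nbPMF_succ_add] using h

lemma hasSum_nbPMF_mul {t : ℕ} (ht : 1 ≤ t) {p : ℝ} (hp : 0 < p) (hp1 : p ≤ 1) :
    HasSum (fun n ↦ nbPMF t p (t + n) * (t + n : ℕ)) (t / p) := by
  obtain ⟨s, rfl⟩ := Nat.exists_eq_add_of_le' ht
  have h := (hasSum_choose_mul_geometric_of_norm_lt_one (s + 1)
    (norm_one_sub_lt_one hp hp1)).mul_left ((s + 1 : ℕ) * p ^ (s + 1))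
  rw [sub_sub_cancel, show ((s + 1 : ℕ) : ℝ) * p ^ (s + 1) * (1 / p ^ (s + 1 + 1)) =
    (s + 1 : ℕ) / p by field_simp; ring] at h
  refine h.congr_fun fun n ↦ ?_
  have hchoose : ((s + 1 + n : ℕ) : ℝ) * (n + s).choose s =
      (s + 1 : ℕ) * (n + (s + 1)).choose (s + 1) := by
    rw [show s + 1 + n = n + s + 1 by ring]
    exact_mod_cast (Nat.add_one_mul_choose_eq (n + s) s).trans (mul_comm _ _)
  rw [nbPMF_succ_add]
  linear_combination p ^ (s + 1) * (1 - p) ^ n * hchoose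

lemma tsum_nbPMF_mul_log_sq_le {t : ℕ} (ht : 1 ≤ t) {p : ℝ} (hp : 0 < p) (hp1 : p ≤ 1) :
    ∑' n, nbPMF t p (t + n) * log ((t + n : ℕ) / t) ^ 2 ≤ 2 * log p ^ 2 + 8 := by
  have ht0 : (0 : ℝ) < t := by exact_mod_cast ht
  have hg : HasSum (fun n ↦ nbPMF t p (t + n) * (2 * log p ^ 2 + 8 * (p * ((t + n : ℕ) / t))))
      (2 * log p ^ 2 + 8) := by
    have h := ((hasSum_nbPMF ht hp hp1).mul_left (2 * log p ^ 2)).add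
      ((hasSum_nbPMF_mul ht hp hp1).mul_left (8 * p / t))
    rw [show 2 * log p ^ 2 * 1 + 8 * p / t * (t / p) = 2 * log p ^ 2 + 8 by field_simp] at h
    exact h.congr_fun fun n ↦ by ring
  have hle : ∀ n, nbPMF t p (t + n) * log ((t + n : ℕ) / t) ^ 2 ≤
      nbPMF t p (t + n) * (2 * log p ^ 2 + 8 * (p * ((t + n : ℕ) / t))) := fun n ↦ by
    refine mul_le_mul_of_nonneg_left (log_sq_le_of_one_le ?_ hp) (nbPMF_nonneg t hp.le hp1 _)
    rw [one_le_div ht0]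
    exact_mod_cast Nat.le_add_right t n
  have hf0 : ∀ n, 0 ≤ nbPMF t p (t + n) * log ((t + n : ℕ) / t) ^ 2 :=
    fun n ↦ mul_nonneg (nbPMF_nonneg t hp.le hp1 _) (sq_nonneg _)
  calc _ ≤ _ := (hg.summable.of_nonneg_of_le hf0 hle).tsum_le_tsum hle hg.summable
    _ = _ := hg.tsum_eq

lemma Real.sum_mul_log_sq_le {ι : Type*} [Fintype ι] (p : ι → ℝ) (hp : ∀ i, p i ∈ Set.Ioc 0 1)
    (hsum : ∑ i, p i = 1) : ∑ i, p i * log (p i) ^ 2 ≤ 4 * log (Fintype.card ι) ^ 2 + 16 := by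
  have hk : (0 : ℝ) < Fintype.card ι := by
    have : Nonempty ι := by
      by_contra h
      simp [not_nonempty_iff.mp h] at hsum
    exact_mod_cast Fintype.card_pos
  calc ∑ i, p i * log (p i) ^ 2
      ≤ ∑ i, (4 * p i * log (Fintype.card ι) ^ 2 + 16 / Fintype.card ι) :=
        sum_le_sum fun i _ ↦ mul_log_sq_le (hp i).1 (hp i).2 hk
    _ = 4 * log (Fintype.card ι) ^ 2 + 16 := by
        rw [sum_add_distrib, ← sum_mul, ← mul_sum, hsum, sum_const, card_univ, nsmul_eq_mul,
          mul_div_cancel₀ _ hk.ne']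
        ring

lemma sum_mul_tsum_nbPMF_mul_log_sq_le {ι : Type*} [Fintype ι] {t : ℕ} (ht : 1 ≤ t) (p : ι → ℝ)
    (hp : ∀ i, p i ∈ Set.Ioc 0 1) (hsum : ∑ i, p i = 1) :
    ∑ i, p i * ∑' n, nbPMF t (p i) (t + n) * log ((t + n : ℕ) / t) ^ 2 ≤
      8 * log (Fintype.card ι) ^ 2 + 40 :=
  calc _ ≤ ∑ i, (2 * (p i * log (p i) ^ 2) + 8 * p i) := sum_le_sum fun i _ ↦
        (mul_le_mul_of_nonneg_left (tsum_nbPMF_mul_log_sq_le ht (hp i).1 (hp i).2)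
          (hp i).1.le).trans_eq (by ring)
    _ = 2 * ∑ i, p i * log (p i) ^ 2 + 8 := by
        rw [sum_add_distrib, ← mul_sum, ← mul_sum, hsum, mul_one]
    _ ≤ 8 * log (Fintype.card ι) ^ 2 + 40 := by linarith [sum_mul_log_sq_le p hp hsum]

/-- There is a universal constant `C > 0` such that for every integer
`k ≥ 2`, every integer `t ≥ 1`, and every probability vector `p` on `{1,…,k}` with
entries in `(0,1]`, the random variable `W = log₂(X/t)` (draw `i ~ p`, then
`X ~ NB(t, p_i)`) has variance at most `C·(log₂ k)²`:
`E[W²] − (E[W])² ≤ C (log₂ k)²`. -/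
theorem variance_log_estimator_bound :
    ∃ C : ℝ, 0 < C ∧
      ∀ k t : ℕ, 2 ≤ k → 1 ≤ t →
        ∀ p : Fin k → ℝ, (∀ i, p i ∈ Set.Ioc (0 : ℝ) 1) → (∑ i, p i = 1) →
          (∑ i, p i * ∑' n : ℕ, nbPMF t (p i) (t + n) *
              (Real.logb 2 (((t + n : ℕ) : ℝ) / (t : ℝ))) ^ 2)
            - (∑ i, p i * ∑' n : ℕ, nbPMF t (p i) (t + n) *
                Real.logb 2 (((t + n : ℕ) : ℝ) / (t : ℝ))) ^ 2
          ≤ C * (Real.logb 2 (k : ℝ)) ^ 2 := by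
  have hl2 : 0 < log 2 := log_pos one_lt_two
  refine ⟨8 + 40 / log 2 ^ 2, by positivity, fun k t hk ht p hp hsum ↦ ?_⟩
  have hlogk : log 2 ≤ log k := log_le_log two_pos (by exact_mod_cast hk)
  have hmix := sum_mul_tsum_nbPMF_mul_log_sq_le ht p hp hsum
  rw [Fintype.card_fin] at hmix
  calc _ ≤ ∑ i, p i * ∑' n, nbPMF t (p i) (t + n) * logb 2 ((t + n : ℕ) / t) ^ 2 :=
        sub_le_self _ (sq_nonneg _)
    _ = (∑ i, p i * ∑' n, nbPMF t (p i) (t + n) * log ((t + n : ℕ) / t) ^ 2) / log 2 ^ 2 := by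
        simp only [logb, div_pow, ← mul_div_assoc, tsum_div_const, sum_div]
    _ ≤ (8 * log k ^ 2 + 40) / log 2 ^ 2 := by gcongr
    _ ≤ (8 + 40 / log 2 ^ 2) * logb 2 k ^ 2 := by
        rw [logb, div_pow, div_le_iff₀ (by positivity)]
        field_simp
        nlinarith [pow_le_pow_left₀ hl2.le hlogk 2]
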